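/- arXiv:1810.09169 — 2 statements merged into one kernel-verified Lean document; each statement's English description precedes it below -/
import Mathlib

section
/- Let X be a Hausdorff CLP-compact topological space with a dense subspace Y all of whose points are isolated in Y, and let Z be a subset of X such that Z \ Y is finite. If the set cl(Z) \ Z is compact (where cl(Z) is the closure of Z in X), then cl(Z) is compact. -/
/-! Preamble: graph inverse semigroups and compactness-type properties. -/

namespace GISPaper

variable {V E : Type*}

/-- `IsPathFrom src rng v l` means that the list of edges `l` is composable
and starts at the vertex `v`. -/
def IsPathFrom (src rng : E → V) : V → List E → Prop
  | _, [] => True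
  | v, e :: l => src e = v ∧ IsPathFrom src rng (rng e) l

/-- The end vertex of a list of edges starting at the vertex `v`. -/
def pathEnd (rng : E → V) : V → List E → V
  | v, [] => v
  | _, e :: l => pathEnd rng (rng e) l

theorem pathEnd_append (rng : E → V) (v : V) (l₁ l₂ : List E) :
    pathEnd rng v (l₁ ++ l₂) = pathEnd rng (pathEnd rng v l₁) l₂ := by
  induction l₁ generalizing v with
  | nil => rfl
  | cons e l ih => simpa [pathEnd] using ih (rng e)

theorem isPathFrom_append (src rng : E → V) (v : V) (l₁ l₂ : List E) :
    IsPathFrom src rng v (l₁ ++ l₂) ↔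
      IsPathFrom src rng v l₁ ∧ IsPathFrom src rng (pathEnd rng v l₁) l₂ := by
  induction l₁ generalizing v with
  | nil => simp [IsPathFrom, pathEnd]
  | cons e l ih => simp [IsPathFrom, pathEnd, ih (rng e), and_assoc]

/-- A (directed) path in the graph `(V, E, src, rng)`: a starting vertex together
with a composable list of edges (a path of length zero is just a vertex). -/
structure GPath (src rng : E → V) where
  start : V
  edges : List E
  isPath : IsPathFrom src rng start edges

/-- The range (end vertex) of a path. -/
def GPath.range {src rng : E → V} (p : GPath src rng) : V :=
  pathEnd rng p.start p.edges

/-- The nonzero elements of the graph inverse semigroup: pairs `u v⁻¹` of paths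
with `r u = r v`. -/
def GISElem (src rng : E → V) : Type _ :=
  {p : GPath src rng × GPath src rng // p.1.range = p.2.range}

/-- The graph inverse semigroup over the graph `(V, E, src, rng)`: the nonzero
elements `u v⁻¹` together with a zero element (represented by `none`). -/
def GIS (src rng : E → V) : Type _ := Option (GISElem src rng)

instance {src rng : E → V} : Zero (GIS src rng) :=
  ⟨(none : Option (GISElem src rng))⟩

open Classical in
/-- The multiplication of a graph inverse semigroup:
`u₁v₁⁻¹ · u₂v₂⁻¹ = u₁w v₂⁻¹` if `u₂ = v₁ w`, `u₁v₁⁻¹ · u₂v₂⁻¹ = u₁ (v₂ w)⁻¹` if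
`v₁ = u₂ w`, and `0` otherwise; `0` is absorbing. -/
noncomputable def GIS.mul {src rng : E → V} :
    Option (GISElem src rng) → Option (GISElem src rng) → Option (GISElem src rng)
  | some ⟨(u₁, v₁), h₁⟩, some ⟨(u₂, v₂), h₂⟩ =>
    if h : v₁.start = u₂.start ∧ v₁.edges <+: u₂.edges then
      some ⟨(⟨u₁.start, u₁.edges ++ u₂.edges.drop v₁.edges.length, by
        obtain ⟨hs, t, ht⟩ := h
        have hdrop : u₂.edges.drop v₁.edges.length = t := by
          rw [← ht, List.drop_left]
        have hu₂ := u₂.isPath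
        rw [← ht, isPathFrom_append] at hu₂
        rw [hdrop, isPathFrom_append]
        refine ⟨u₁.isPath, ?_⟩
        have he : pathEnd rng u₁.start u₁.edges = pathEnd rng u₂.start v₁.edges := by
          rw [← hs]; exact h₁
        rw [he]; exact hu₂.2⟩, v₂), by
        show pathEnd rng u₁.start (u₁.edges ++ u₂.edges.drop v₁.edges.length) = v₂.range
        obtain ⟨hs, t, ht⟩ := h
        have hdrop : u₂.edges.drop v₁.edges.length = t := by
          rw [← ht, List.drop_left]
        rw [hdrop, pathEnd_append]
        have he : pathEnd rng u₁.start u₁.edges = pathEnd rng u₂.start v₁.edges := by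
          rw [← hs]; exact h₁
        rw [he, ← pathEnd_append, ht]
        exact h₂⟩
    else if h' : u₂.start = v₁.start ∧ u₂.edges <+: v₁.edges then
      some ⟨(u₁, ⟨v₂.start, v₂.edges ++ v₁.edges.drop u₂.edges.length, by
        obtain ⟨hs, t, ht⟩ := h'
        have hdrop : v₁.edges.drop u₂.edges.length = t := by
          rw [← ht, List.drop_left]
        have hv₁ := v₁.isPath
        rw [← ht, isPathFrom_append] at hv₁
        rw [hdrop, isPathFrom_append]
        refine ⟨v₂.isPath, ?_⟩
        have he : pathEnd rng v₂.start v₂.edges = pathEnd rng v₁.start u₂.edges := by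
          rw [← hs]; exact h₂.symm
        rw [he]; exact hv₁.2⟩), by
        show u₁.range = pathEnd rng v₂.start (v₂.edges ++ v₁.edges.drop u₂.edges.length)
        obtain ⟨hs, t, ht⟩ := h'
        have hdrop : v₁.edges.drop u₂.edges.length = t := by
          rw [← ht, List.drop_left]
        have he : pathEnd rng v₂.start v₂.edges = pathEnd rng v₁.start u₂.edges := by
          rw [← hs]; exact h₂.symm
        rw [hdrop, pathEnd_append, he, ← pathEnd_append, ht]
        exact h₁⟩
    else none
  | _, _ => none

noncomputable instance {src rng : E → V} : Mul (GIS src rng) := ⟨GIS.mul⟩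

theorem GIS.zero_mul {src rng : E → V} (x : GIS src rng) : 0 * x = 0 := rfl

/-- The topology in which every nonzero point is isolated and the open
neighbourhoods of `0` are exactly the cofinite sets containing `0`. -/
def tauC (α : Type*) [Zero α] : TopologicalSpace α where
  IsOpen U := (0 : α) ∈ U → Uᶜ.Finite
  isOpen_univ := by simp
  isOpen_inter U W hU hW h := by
    rw [Set.compl_inter]
    exact (hU h.1).union (hW h.2)
  isOpen_sUnion 𝒮 h h0 := by
    obtain ⟨U, hU, hU0⟩ := h0
    exact (h U hU hU0).subset (Set.compl_subset_compl.mpr (Set.subset_sUnion_of_mem hU))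

/-- A topological space is CLP-compact if every cover by clopen sets has a
finite subcover. -/
def CLPCompact (X : Type*) [TopologicalSpace X] : Prop :=
  ∀ 𝒰 : Set (Set X), (∀ U ∈ 𝒰, IsClopen U) → ⋃₀ 𝒰 = Set.univ →
    ∃ ℱ ⊆ 𝒰, ℱ.Finite ∧ ⋃₀ ℱ = Set.univ

/-- A topological space is countably compact if every infinite subset has an
accumulation point. -/
def CountablyCompactSpace (X : Type*) [TopologicalSpace X] : Prop :=
  ∀ B : Set X, B.Infinite → ∃ x : X, AccPt x (Filter.principal B)

/-- A topological space is feebly compact if every locally finite family of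
nonempty open sets is finite. -/
def FeeblyCompact (X : Type*) [TopologicalSpace X] : Prop :=
  ∀ 𝒰 : Set (Set X), (∀ U ∈ 𝒰, IsOpen U ∧ U.Nonempty) →
    (∀ x : X, ∃ N ∈ nhds x, {U ∈ 𝒰 | (U ∩ N).Nonempty}.Finite) → 𝒰.Finite

/-- The multiplication of the bicyclic monoid on `ℕ × ℕ`. -/
def bicyclicMul (x y : ℕ × ℕ) : ℕ × ℕ :=
  (x.1 + y.1 - min x.2 y.1, x.2 + y.2 - min x.2 y.1)

/-- The multiplication of the semigroup of `X × X`-matrix units (with zero `none`). -/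
def matUnitsMul {X : Type*} [DecidableEq X] :
    Option (X × X) → Option (X × X) → Option (X × X)
  | some (a, b), some (c, d) => if b = c then some (a, d) else none
  | _, _ => none

/-- A cycle based at the vertex `e`: a path of nonzero length from `e` to `e`. -/
def HasCycleAt (src rng : E → V) (e : V) : Prop :=
  ∃ p : GPath src rng, p.edges ≠ [] ∧ p.start = e ∧ p.range = e

end GISPaper


/-!
Since `Y` is dense, its points, being isolated in `Y`, are isolated in `X`. Given an open cover
of `closure Z`, finitely many members cover the compact set `(closure Z \ Z) ∪ (Z \ Y)`; what
they miss is a closed subset of `closure Z` made of points of `Y`, hence a clopen set of isolated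
points, which CLP-compactness forces to be finite.
-/

open Set

theorem isOpen_singleton_of_dense_of_inter_eq {X : Type*} [TopologicalSpace X] [T1Space X]
    {Y U : Set X} {y : X} (hY : Dense Y) (hU : IsOpen U) (hUY : U ∩ Y = {y}) :
    IsOpen ({y} : Set X) := by
  have hUy : U ⊆ {y} := by
    simpa [hUY] using hY.open_subset_closure_inter hU
  have hyU : y ∈ U := (hUY.symm ▸ mem_singleton y : y ∈ U ∩ Y).1
  rwa [← hUy.antisymm (singleton_subset_iff.mpr hyU)]

theorem GISPaper.CLPCompact.finite_of_isClosed {X : Type*} [TopologicalSpace X] [T1Space X]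
    (hX : CLPCompact X) {S : Set X} (hS : IsClosed S) (hiso : ∀ x ∈ S, IsOpen ({x} : Set X)) :
    S.Finite := by
  have hSopen : IsOpen S := isOpen_iff_forall_mem_open.mpr fun x hx =>
    ⟨{x}, singleton_subset_iff.mpr hx, hiso x hx, rfl⟩
  obtain ⟨ℱ, hℱ, hℱfin, hℱcov⟩ := hX (insert Sᶜ ((fun x => {x}) '' S))
    (by
      rintro V (rfl | ⟨x, hx, rfl⟩)
      · exact ⟨hSopen.isClosed_compl, hS.isOpen_compl⟩
      · exact ⟨isClosed_singleton, hiso x hx⟩)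
    (eq_univ_of_forall fun x => by
      by_cases hx : x ∈ S
      · exact ⟨{x}, mem_insert_of_mem _ ⟨x, hx, rfl⟩, rfl⟩
      · exact ⟨Sᶜ, mem_insert _ _, hx⟩)
  have hS_sub : S ⊆ ⋃ V ∈ ℱ, V ∩ S := fun x hx => by
    obtain ⟨V, hV, hxV⟩ := hℱcov.symm ▸ mem_univ x
    exact mem_biUnion hV ⟨hxV, hx⟩
  refine (hℱfin.biUnion fun V hV => ?_).subset hS_sub
  rcases hℱ hV with rfl | ⟨x, -, rfl⟩
  · simp
  · exact (finite_singleton x).inter_of_left S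

theorem isCompact_of_forall_isOpen_isCompact_diff {X : Type*} [TopologicalSpace X] {A C : Set X}
    (hC : IsCompact C) (hCA : C ⊆ A) (h : ∀ W, IsOpen W → C ⊆ W → IsCompact (A \ W)) :
    IsCompact A := by
  classical
  refine isCompact_of_finite_subcover fun U hU hcov => ?_
  obtain ⟨t, ht⟩ := hC.elim_finite_subcover U hU (hCA.trans hcov)
  obtain ⟨t', ht'⟩ := (h _ (isOpen_biUnion fun i _ => hU i) ht).elim_finite_subcover U hU
    (sdiff_subset.trans hcov)
  refine ⟨t ∪ t', fun x hx => ?_⟩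
  rw [Finset.set_biUnion_union]
  by_cases hxW : x ∈ ⋃ i ∈ t, U i
  · exact Or.inl hxW
  · exact Or.inr (ht' ⟨hx, hxW⟩)

open GISPaper in
/-- Let `X` be a Hausdorff CLP-compact space with a dense subspace `Y`
all of whose points are isolated in `Y`, and `Z ⊆ X` with `Z \ Y` finite. If
`closure Z \ Z` is compact, then `closure Z` is compact. -/
theorem statement1 {X : Type*} [TopologicalSpace X] [T2Space X]
    (hCLP : CLPCompact X)
    (Y : Set X) (hYdense : Dense Y)
    (hYdisc : ∀ y ∈ Y, ∃ U : Set X, IsOpen U ∧ U ∩ Y = {y})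
    (Z : Set X) (hZY : (Z \ Y).Finite)
    (hK : IsCompact (closure Z \ Z)) :
    IsCompact (closure Z) := by
  have hYiso : ∀ y ∈ Y, IsOpen ({y} : Set X) := fun y hy => by
    obtain ⟨U, hU, hUY⟩ := hYdisc y hy
    exact isOpen_singleton_of_dense_of_inter_eq hYdense hU hUY
  refine isCompact_of_forall_isOpen_isCompact_diff (hK.union hZY.isCompact)
    (union_subset sdiff_subset (sdiff_subset.trans subset_closure)) fun W hW hKW => ?_
  have hrest_Y : closure Z \ W ⊆ Y := by
    rintro x ⟨hxZ, hxW⟩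
    by_contra hxY
    by_cases hxZ' : x ∈ Z
    · exact hxW (hKW (Or.inr ⟨hxZ', hxY⟩))
    · exact hxW (hKW (Or.inl ⟨hxZ, hxZ'⟩))
  exact (hCLP.finite_of_isClosed (isClosed_closure.sdiff hW)
    fun x hx => hYiso x (hrest_Y hx)).isCompact
end

section
/- Let S be a Hausdorff CLP-compact topological space with a separately continuous semigroup operation which contains a graph inverse semigroup G(E) as a dense subsemigroup. Then for every subset X ⊆ G(E), the closure of X in S is countably compact at X, i.e., every infinite subset of X has an accumulation point in the closure of X in S. -/
/-!
Every nonzero element of `G(E)` is an isolated point of `S`. For an idempotent `e = w w⁻¹`,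
take elements `y ≠ e` of `G(E)` converging to `e`. Since `e y → e` and `y e → e` while `e ≠ 0`,
eventually `y = m n⁻¹` with `m`, `n` starting at `w` and, say, `m` nonempty with first edge `f`.
Then `f f⁻¹ y ∈ {y, 0}`, whereas separate continuity gives `f f⁻¹ y → f f⁻¹ e = f f⁻¹ ∉ {e, 0}`.
A general `u v⁻¹` is mapped to `e_{r(u)}` by the continuous map `s ↦ u⁻¹ s v`, whose fibre over
`e_{r(u)}` in `G(E)` is finite (it consists of elements `b c⁻¹` with `b`, `c` prefixes of `u`, `v`).

Now if an infinite `B ⊆ X` had no accumulation point in `closure X`, it would have none at all,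
so `B \ {0}` would be an infinite closed set of isolated points: an infinite clopen set
partitioned into clopen singletons, which contradicts CLP-compactness.
-/

theorem List.prefix_of_comparable_of_length_le {α : Type*} {l₁ l₂ : List α}
    (h : l₁ <+: l₂ ∨ l₂ <+: l₁) (hl : l₁.length ≤ l₂.length) : l₁ <+: l₂ := by
  rcases h with h | h
  exacts [h, (h.eq_of_length_le hl).symm ▸ List.prefix_rfl]

namespace GISPaper

variable {V E : Type*} {src rng : E → V}

theorem GPath.ext {p q : GPath src rng} (hs : p.start = q.start) (he : p.edges = q.edges) :
    p = q := by
  cases p; cases q; cases hs; cases he; rfl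

theorem GPath.src_eq_start_of_edges_eq_cons {p : GPath src rng} {f : E} {l : List E}
    (h : p.edges = f :: l) : src f = p.start :=
  (h ▸ p.isPath : IsPathFrom src rng p.start (f :: l)).1

def GPath.nil (src rng : E → V) (w : V) : GPath src rng := ⟨w, [], trivial⟩

def GPath.ofEdge (src rng : E → V) (f : E) : GPath src rng := ⟨src f, [f], ⟨rfl, trivial⟩⟩

namespace GIS

def ofPaths (p q : GPath src rng) (h : p.range = q.range) : GIS src rng := some ⟨(p, q), h⟩

def vertex (src rng : E → V) (w : V) : GIS src rng :=
  ofPaths (GPath.nil src rng w) (GPath.nil src rng w) rfl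

def path (p : GPath src rng) : GIS src rng := ofPaths p (GPath.nil src rng p.range) rfl

def pathInv (p : GPath src rng) : GIS src rng := ofPaths (GPath.nil src rng p.range) p rfl

def edgeIdem (src rng : E → V) (f : E) : GIS src rng :=
  ofPaths (GPath.ofEdge src rng f) (GPath.ofEdge src rng f) rfl

def key : GIS src rng → Option ((V × List E) × (V × List E))
  | none => none
  | some z => some ((z.1.1.start, z.1.1.edges), (z.1.2.start, z.1.2.edges))

theorem key_injective : Function.Injective (key : GIS src rng → _) := by
  rintro (_ | ⟨⟨p, q⟩, h⟩) (_ | ⟨⟨p', q'⟩, h'⟩) hk <;> simp only [key, reduceCtorEq] at hk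
  · rfl
  · simp only [Option.some.injEq, Prod.mk.injEq] at hk
    obtain ⟨⟨hs, he⟩, hs', he'⟩ := hk
    obtain rfl := GPath.ext hs he
    obtain rfl := GPath.ext hs' he'
    rfl

open Classical in
/-- For keys `a`, `b` of `p q⁻¹`, `m n⁻¹`, one of `m.drop q.length` and `q.drop m.length` is
empty, so this single formula covers both nonzero cases of `GIS.mul`. -/
noncomputable def keyMul (a b : (V × List E) × (V × List E)) :
    Option ((V × List E) × (V × List E)) :=
  if a.2.1 = b.1.1 ∧ (a.2.2 <+: b.1.2 ∨ b.1.2 <+: a.2.2) then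
    some ((a.1.1, a.1.2 ++ b.1.2.drop a.2.2.length), (b.2.1, b.2.2 ++ a.2.2.drop b.1.2.length))
  else none

theorem key_mul (x y : GIS src rng) :
    key (x * y) = (key x).bind fun a => (key y).bind (keyMul a) := by
  rcases x with _ | ⟨⟨p, q⟩, h⟩
  · rfl
  rcases y with _ | ⟨⟨m, n⟩, h'⟩
  · rfl
  change key (GIS.mul _ _) = _
  simp only [GIS.mul, key, Option.bind_some, keyMul]
  by_cases h₁ : q.start = m.start ∧ q.edges <+: m.edges
  · rw [dif_pos h₁, if_pos ⟨h₁.1, .inl h₁.2⟩, List.drop_eq_nil_of_le h₁.2.length_le,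
      List.append_nil]
  rw [dif_neg h₁]
  by_cases h₂ : m.start = q.start ∧ m.edges <+: q.edges
  · rw [dif_pos h₂, if_pos ⟨h₂.1.symm, .inr h₂.2⟩, List.drop_eq_nil_of_le h₂.2.length_le,
      List.append_nil]
  rw [dif_neg h₂, if_neg]
  rintro ⟨hs, hpre | hpre⟩
  exacts [h₁ ⟨hs, hpre⟩, h₂ ⟨hs.symm, hpre⟩]

@[simp] theorem key_zero : key (0 : GIS src rng) = none := rfl

@[simp] theorem key_ofPaths (p q : GPath src rng) (h : p.range = q.range) :
    key (ofPaths p q h) = some ((p.start, p.edges), (q.start, q.edges)) := rfl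

theorem ofPaths_ne_zero (p q : GPath src rng) (h : p.range = q.range) : ofPaths p q h ≠ 0 :=
  Option.some_ne_none _

theorem eq_ofPaths_of_ne_zero {x : GIS src rng} (hx : x ≠ 0) :
    ∃ p q h, x = ofPaths p q h := by
  rcases x with _ | ⟨⟨p, q⟩, h⟩
  exacts [absurd rfl hx, ⟨p, q, h, rfl⟩]

theorem vertex_mul_vertex (w : V) : vertex src rng w * vertex src rng w = vertex src rng w :=
  key_injective <| by simp [key_mul, keyMul, vertex, GPath.nil]

theorem edgeIdem_mul_vertex (f : E) :
    edgeIdem src rng f * vertex src rng (src f) = edgeIdem src rng f :=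
  key_injective <| by simp [key_mul, keyMul, vertex, edgeIdem, GPath.nil, GPath.ofEdge]

theorem vertex_mul_edgeIdem (f : E) :
    vertex src rng (src f) * edgeIdem src rng f = edgeIdem src rng f :=
  key_injective <| by simp [key_mul, keyMul, vertex, edgeIdem, GPath.nil, GPath.ofEdge]

theorem edgeIdem_ne_vertex (f : E) (w : V) : edgeIdem src rng f ≠ vertex src rng w := by
  intro h
  simpa [vertex, edgeIdem, GPath.nil, GPath.ofEdge] using congrArg key h

theorem edgeIdem_mul_ofPaths {m n : GPath src rng} (h : m.range = n.range) (hm : m.edges ≠ [])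
    (f : E) : edgeIdem src rng f * ofPaths m n h = ofPaths m n h ∨
      edgeIdem src rng f * ofPaths m n h = 0 := by
  have hlen : [f].length ≤ m.edges.length := List.length_pos_iff.mpr hm
  by_cases hc : src f = m.start ∧ ([f] <+: m.edges ∨ m.edges <+: [f])
  · have hhead : f :: m.edges.tail = m.edges := by
      simpa using List.prefix_iff_eq_append.mp (List.prefix_of_comparable_of_length_le hc.2 hlen)
    left
    exact key_injective <| by
      simp [key_mul, keyMul, edgeIdem, GPath.ofEdge, hc, List.drop_eq_nil_of_le hlen, hhead]
  · right
    exact key_injective <| by simp [key_mul, keyMul, edgeIdem, GPath.ofEdge, hc]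

theorem ofPaths_mul_edgeIdem {m n : GPath src rng} (h : m.range = n.range) (hn : n.edges ≠ [])
    (f : E) : ofPaths m n h * edgeIdem src rng f = ofPaths m n h ∨
      ofPaths m n h * edgeIdem src rng f = 0 := by
  have hlen : [f].length ≤ n.edges.length := List.length_pos_iff.mpr hn
  by_cases hc : n.start = src f ∧ (n.edges <+: [f] ∨ [f] <+: n.edges)
  · have hhead : f :: n.edges.tail = n.edges := by
      simpa using
        List.prefix_iff_eq_append.mp (List.prefix_of_comparable_of_length_le hc.2.symm hlen)
    left
    exact key_injective <| by
      simp [key_mul, keyMul, edgeIdem, GPath.ofEdge, hc, List.drop_eq_nil_of_le hlen, hhead]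
  · right
    exact key_injective <| by simp [key_mul, keyMul, edgeIdem, GPath.ofEdge, hc]

theorem eq_ofPaths_of_ne_vertex {y : GIS src rng} {w : V} (hy0 : y ≠ 0)
    (hl : vertex src rng w * y ≠ 0) (hr : y * vertex src rng w ≠ 0) (hy : y ≠ vertex src rng w) :
    (∃ m n h, y = ofPaths m n h ∧ m.start = w ∧ m.edges ≠ []) ∨
      ∃ m n h, y = ofPaths m n h ∧ n.start = w ∧ n.edges ≠ [] := by
  obtain ⟨m, n, h, rfl⟩ := eq_ofPaths_of_ne_zero hy0
  have hm : m.start = w := by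
    by_contra hm
    exact hl (key_injective <| by simp [key_mul, keyMul, vertex, GPath.nil, Ne.symm hm])
  have hn : n.start = w := by
    by_contra hn
    exact hr (key_injective <| by simp [key_mul, keyMul, vertex, GPath.nil, hn])
  by_cases hm' : m.edges = []
  · refine .inr ⟨m, n, h, rfl, hn, fun hn' => hy (key_injective ?_)⟩
    simp [vertex, GPath.nil, hm, hn, hm', hn']
  · exact .inl ⟨m, n, h, rfl, hm, hm'⟩

theorem pathInv_mul_ofPaths_mul_path {u v : GPath src rng} (h : u.range = v.range) :
    pathInv u * ofPaths u v h * path v = vertex src rng u.range :=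
  key_injective <| by simp [key_mul, keyMul, pathInv, path, vertex, GPath.nil, h]

theorem finite_setOf_pathInv_mul_mul_path_eq_vertex (u v : GPath src rng) :
    {y | pathInv u * y * path v = vertex src rng u.range}.Finite := by
  have hT : ({b | b <+: u.edges} ×ˢ {c | c <+: v.edges}).Finite := by
    simp only [← List.mem_inits]
    exact (List.finite_toSet _).prod (List.finite_toSet _)
  refine ((hT.image fun bc => some ((u.start, bc.1), (v.start, bc.2))).preimage
    key_injective.injOn).subset ?_
  intro y hy
  have hk := congrArg key hy
  obtain rfl | hy0 := eq_or_ne y 0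
  · simp [key_mul, vertex] at hk
  obtain ⟨b, c, h, rfl⟩ := eq_ofPaths_of_ne_zero hy0
  simp only [key_mul, keyMul, pathInv, path, vertex, GPath.nil, key_ofPaths, Option.bind_some,
    List.nil_append] at hk
  split_ifs at hk with h₁ <;> simp only [Option.bind_some, Option.bind_none, reduceCtorEq] at hk
  split_ifs at hk with h₂
  simp only [Option.some.injEq, Prod.mk.injEq, List.append_eq_nil_iff, List.drop_eq_nil_iff] at hk
  have hb : b.edges <+: u.edges := List.prefix_of_comparable_of_length_le h₁.2.symm hk.1.2.1
  have hc : c.edges <+: v.edges := (List.prefix_append _ _).trans <|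
    List.prefix_of_comparable_of_length_le h₂.2 hk.2.2
  exact ⟨(b.edges, c.edges), ⟨hb, hc⟩, by simp [h₁.1, h₂.1]⟩

end GIS

end GISPaper

open Filter Topology

section

variable {α X : Type*} [TopologicalSpace X]

theorem eq_or_eq_of_frequently_eq_or_eq [T2Space X] {F : Filter α} {g h : α → X} {a b z : X}
    (hg : Tendsto g F (𝓝 a)) (hh : Tendsto h F (𝓝 b)) (hfreq : ∃ᶠ x in F, h x = g x ∨ h x = z) :
    b = a ∨ b = z := by
  rcases frequently_or_distrib.mp hfreq with hfreq | hfreq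
  · exact .inl (tendsto_nhds_unique_of_frequently_eq hh hg hfreq)
  · exact .inr (tendsto_nhds_unique_of_frequently_eq hh tendsto_const_nhds hfreq)

theorem DenseRange.isOpen_singleton_of_forall_tendsto [T1Space X] {ι : α → X} (hd : DenseRange ι)
    (a : α) (h : ∀ F : Filter α, F.NeBot → Tendsto ι F (𝓝 (ι a)) → (∀ᶠ y in F, y ≠ a) → False) :
    IsOpen {ι a} := by
  by_contra hiso
  have hne : (𝓝[≠] ι a).NeBot := ⟨(isOpen_singleton_iff_punctured_nhds _).not.mp hiso⟩
  have hlim : Tendsto ι (comap ι (𝓝[≠] ι a)) (𝓝[≠] ι a) := tendsto_comap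
  refine h _ (comap_neBot fun t ht => ?_) (tendsto_nhds_of_tendsto_nhdsWithin hlim)
    ((hlim.eventually_mem self_mem_nhdsWithin).mono fun y hy => ne_of_apply_ne ι hy)
  obtain ⟨U, hU, haU, hUt⟩ := mem_nhdsWithin.mp ht
  obtain ⟨y, hy⟩ := hd.exists_mem_open (isOpen_compl_singleton.inter hU)
    (nonempty_of_mem (inter_mem_nhdsWithin {ι a}ᶜ (hU.mem_nhds haU)))
  exact ⟨y, hUt hy.symm⟩

theorem DenseRange.isOpen_singleton_of_finite_fiber [T1Space X] {ι : α → X} (hd : DenseRange ι)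
    (hinj : Function.Injective ι) {Φ : X → X} (hΦ : Continuous Φ) {φ : α → α}
    (hcomm : ∀ y, Φ (ι y) = ι (φ y)) {a : α} (hfin : {y | φ y = φ a}.Finite)
    (hiso : IsOpen {ι (φ a)}) : IsOpen {ι a} := by
  refine hd.isOpen_singleton_of_forall_tendsto a fun F _ hlim hne => ?_
  have hfiber : ∀ᶠ y in F, φ y = φ a := by
    have hΦlim := (hΦ.tendsto _).comp hlim
    simp only [Function.comp_def, hcomm] at hΦlim
    exact (hΦlim.eventually_mem (hiso.mem_nhds rfl)).mono fun y hy => hinj hy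
  have hout : ∀ᶠ y in F, ∀ g ∈ {y | φ y = φ a} \ {a}, y ≠ g :=
    (eventually_all_finite hfin.sdiff).mpr fun g hg =>
      (hlim.eventually_ne (hinj.ne (Ne.symm hg.2))).mono fun y hy => ne_of_apply_ne ι hy
  obtain ⟨y, hya, hyout, hy⟩ := (hfiber.and (hout.and hne)).exists
  exact hyout y ⟨hya, hy⟩ rfl

end

section SeparatelyContinuous

variable {G S : Type*} [Mul G] [TopologicalSpace S] [Mul S] [SeparatelyContinuousMul S]
  {ι : G → S} {F : Filter G} {t : G}

theorem tendsto_mul_left_of_map_mul (hhom : ∀ x y, ι (x * y) = ι x * ι y) (c : G)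
    (hlim : Tendsto ι F (𝓝 (ι t))) : Tendsto (fun y => ι (c * y)) F (𝓝 (ι (c * t))) := by
  simpa only [hhom, Function.comp_def] using
    (SeparatelyContinuousMul.continuous_const_mul.tendsto _).comp hlim

theorem tendsto_mul_right_of_map_mul (hhom : ∀ x y, ι (x * y) = ι x * ι y) (c : G)
    (hlim : Tendsto ι F (𝓝 (ι t))) : Tendsto (fun y => ι (y * c)) F (𝓝 (ι (t * c))) := by
  simpa only [hhom, Function.comp_def] using
    (SeparatelyContinuousMul.continuous_mul_const.tendsto _).comp hlim

variable [Zero G] [T2Space S] {c : G}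

theorem mul_left_eq_self_or_zero_of_frequently (hinj : Function.Injective ι)
    (hhom : ∀ x y, ι (x * y) = ι x * ι y) (hlim : Tendsto ι F (𝓝 (ι t)))
    (hfreq : ∃ᶠ y in F, c * y = y ∨ c * y = 0) : c * t = t ∨ c * t = 0 :=
  (eq_or_eq_of_frequently_eq_or_eq hlim (tendsto_mul_left_of_map_mul hhom c hlim)
    (hfreq.mono fun _ hy => hy.imp (congrArg ι) (congrArg ι))).imp (hinj ·) (hinj ·)

theorem mul_right_eq_self_or_zero_of_frequently (hinj : Function.Injective ι)
    (hhom : ∀ x y, ι (x * y) = ι x * ι y) (hlim : Tendsto ι F (𝓝 (ι t)))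
    (hfreq : ∃ᶠ y in F, y * c = y ∨ y * c = 0) : t * c = t ∨ t * c = 0 :=
  (eq_or_eq_of_frequently_eq_or_eq hlim (tendsto_mul_right_of_map_mul hhom c hlim)
    (hfreq.mono fun _ hy => hy.imp (congrArg ι) (congrArg ι))).imp (hinj ·) (hinj ·)

end SeparatelyContinuous

namespace GISPaper

open GIS

variable {V E : Type*} {src rng : E → V} {S : Type*} [TopologicalSpace S] [T2Space S] [Mul S]
  [SeparatelyContinuousMul S] {ι : GIS src rng → S} {F : Filter (GIS src rng)} {w : V}

theorem not_frequently_left_of_tendsto_vertex (hinj : Function.Injective ι)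
    (hhom : ∀ x y, ι (x * y) = ι x * ι y) (hlim : Tendsto ι F (𝓝 (ι (vertex src rng w)))) :
    ¬∃ᶠ y in F, ∃ m n h, y = ofPaths m n h ∧ m.start = w ∧ m.edges ≠ [] := by
  intro hfreq
  obtain ⟨-, m₀, -, -, -, hw, hm₀⟩ := hfreq.exists
  obtain ⟨f, _, hf⟩ := List.exists_cons_of_ne_nil hm₀
  obtain rfl : src f = w := (GPath.src_eq_start_of_edges_eq_cons hf).trans hw
  have hlimit := mul_left_eq_self_or_zero_of_frequently (c := edgeIdem src rng f) hinj hhom hlim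
    (hfreq.mono fun _ ⟨_, _, h, hy, _, hm⟩ => hy ▸ edgeIdem_mul_ofPaths h hm f)
  rw [edgeIdem_mul_vertex] at hlimit
  exact hlimit.elim (edgeIdem_ne_vertex f _) (ofPaths_ne_zero _ _ _)

theorem not_frequently_right_of_tendsto_vertex (hinj : Function.Injective ι)
    (hhom : ∀ x y, ι (x * y) = ι x * ι y) (hlim : Tendsto ι F (𝓝 (ι (vertex src rng w)))) :
    ¬∃ᶠ y in F, ∃ m n h, y = ofPaths m n h ∧ n.start = w ∧ n.edges ≠ [] := by
  intro hfreq
  obtain ⟨-, -, n₀, -, -, hw, hn₀⟩ := hfreq.exists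
  obtain ⟨f, _, hf⟩ := List.exists_cons_of_ne_nil hn₀
  obtain rfl : src f = w := (GPath.src_eq_start_of_edges_eq_cons hf).trans hw
  have hlimit := mul_right_eq_self_or_zero_of_frequently (c := edgeIdem src rng f) hinj hhom hlim
    (hfreq.mono fun _ ⟨_, _, h, hy, _, hn⟩ => hy ▸ ofPaths_mul_edgeIdem h hn f)
  rw [vertex_mul_edgeIdem] at hlimit
  exact hlimit.elim (edgeIdem_ne_vertex f _) (ofPaths_ne_zero _ _ _)

theorem isOpen_singleton_vertex (hinj : Function.Injective ι)
    (hhom : ∀ x y, ι (x * y) = ι x * ι y) (hdense : DenseRange ι) (w : V) :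
    IsOpen {ι (vertex src rng w)} := by
  refine hdense.isOpen_singleton_of_forall_tendsto _ fun F _ hlim hne => ?_
  have hw0 : ι (vertex src rng w) ≠ ι 0 := hinj.ne (ofPaths_ne_zero _ _ _)
  have hl := tendsto_mul_left_of_map_mul hhom (vertex src rng w) hlim
  have hr := tendsto_mul_right_of_map_mul hhom (vertex src rng w) hlim
  rw [vertex_mul_vertex] at hl hr
  have hbranch : ∀ᶠ y in F, (∃ m n h, y = ofPaths m n h ∧ m.start = w ∧ m.edges ≠ []) ∨
      ∃ m n h, y = ofPaths m n h ∧ n.start = w ∧ n.edges ≠ [] := by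
    filter_upwards [hlim.eventually_ne hw0, hl.eventually_ne hw0, hr.eventually_ne hw0, hne]
      with y h₀ hl₀ hr₀ hy
    exact eq_ofPaths_of_ne_vertex (ne_of_apply_ne ι h₀) (ne_of_apply_ne ι hl₀)
      (ne_of_apply_ne ι hr₀) hy
  rcases frequently_or_distrib.mp hbranch.frequently with hfreq | hfreq
  exacts [not_frequently_left_of_tendsto_vertex hinj hhom hlim hfreq,
    not_frequently_right_of_tendsto_vertex hinj hhom hlim hfreq]

theorem isOpen_singleton_of_ne_zero (hinj : Function.Injective ι)
    (hhom : ∀ x y, ι (x * y) = ι x * ι y) (hdense : DenseRange ι) {a : GIS src rng}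
    (ha : a ≠ 0) : IsOpen {ι a} := by
  obtain ⟨u, v, h, rfl⟩ := eq_ofPaths_of_ne_zero ha
  have hΦ : Continuous fun s => ι (pathInv u) * s * ι (path v) :=
    SeparatelyContinuousMul.continuous_mul_const.comp SeparatelyContinuousMul.continuous_const_mul
  refine hdense.isOpen_singleton_of_finite_fiber hinj hΦ
    (φ := fun y => pathInv u * y * path v) (fun y => by simp only [hhom]) ?_ ?_
  · rw [pathInv_mul_ofPaths_mul_path]
    exact finite_setOf_pathInv_mul_mul_path_eq_vertex u v
  · rw [pathInv_mul_ofPaths_mul_path]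
    exact isOpen_singleton_vertex hinj hhom hdense _

theorem CLPCompact.finite_of_isClosed_of_isOpen_singleton {X : Type*}
    [TopologicalSpace X] [T1Space X] (h : CLPCompact X) {C : Set X} (hC : IsClosed C)
    (hiso : ∀ x ∈ C, IsOpen {x}) : C.Finite := by
  have hCopen : IsOpen C := by simpa using isOpen_biUnion hiso
  obtain ⟨ℱ, hℱ, hfin, hcov⟩ := h (insert Cᶜ ((fun x => {x}) '' C))
    (by
      rintro U (rfl | ⟨x, hx, rfl⟩)
      exacts [⟨hCopen.isClosed_compl, hC.isOpen_compl⟩, ⟨isClosed_singleton, hiso x hx⟩])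
    (Set.eq_univ_of_forall fun x => by
      by_cases hx : x ∈ C
      exacts [⟨{x}, .inr ⟨x, hx, rfl⟩, rfl⟩, ⟨Cᶜ, .inl rfl, hx⟩])
  refine (hfin.preimage Set.singleton_injective.injOn).subset fun x hx => ?_
  obtain ⟨U, hU, hxU⟩ := Set.mem_sUnion.mp (hcov ▸ Set.mem_univ x)
  rcases hℱ hU with rfl | ⟨y, -, rfl⟩
  · exact absurd hx hxU
  · rwa [Set.mem_singleton_iff.mp hxU]

end GISPaper

open GISPaper in
theorem statement3_general {V E : Type*} (src rng : E → V)
    {S : Type*} [TopologicalSpace S] [T2Space S] [Mul S]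
    (hsep : ∀ a : S, Continuous (fun x => a * x) ∧ Continuous (fun x => x * a))
    (hCLP : CLPCompact S)
    (ι : GIS src rng → S) (hinj : Function.Injective ι)
    (hhom : ∀ x y : GIS src rng, ι (x * y) = ι x * ι y)
    (hdense : DenseRange ι) :
    ∀ X : Set (GIS src rng), ∀ B ⊆ X, B.Infinite →
      ∃ s ∈ closure (ι '' X), AccPt s (Filter.principal (ι '' B)) := by
  have : SeparatelyContinuousMul S := ⟨(hsep _).1, (hsep _).2⟩
  intro X B hBX hB
  by_contra! hno
  have hclosed : IsClosed (ι '' (B \ {0})) := (isClosed_iff_derivedSet_subset _).mpr fun s hs => by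
    have hsB := hs.mono (principal_mono.mpr (Set.image_mono Set.sdiff_subset))
    exact (hno s (closure_mono (Set.image_mono hBX) hsB.clusterPt.mem_closure) hsB).elim
  have hfin : (ι '' (B \ {0})).Finite := hCLP.finite_of_isClosed_of_isOpen_singleton hclosed
    (by rintro _ ⟨a, ⟨-, ha⟩, rfl⟩; exact isOpen_singleton_of_ne_zero hinj hhom hdense ha)
  exact (hB.sdiff (Set.finite_singleton 0)) (hfin.of_finite_image hinj.injOn)

open GISPaper in
/-- Let `S` be a Hausdorff CLP-compact space with a separately
continuous (associative) multiplication containing a graph inverse semigroup `G(E)`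
as a dense subsemigroup (via the injective multiplicative map `ι`). Then for every
`X ⊆ G(E)`, the closure of `X` in `S` is countably compact at `X`: every infinite
subset `B` of `X` has an accumulation point in the closure of `X` in `S`. -/
theorem statement3 {V E : Type*} (src rng : E → V)
    {S : Type*} [TopologicalSpace S] [T2Space S] [Mul S]
    (hassoc : ∀ a b c : S, a * b * c = a * (b * c))
    (hsep : ∀ a : S, Continuous (fun x => a * x) ∧ Continuous (fun x => x * a))
    (hCLP : CLPCompact S)
    (ι : GIS src rng → S) (hinj : Function.Injective ι)
    (hhom : ∀ x y : GIS src rng, ι (x * y) = ι x * ι y)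
    (hdense : DenseRange ι) :
    ∀ X : Set (GIS src rng), ∀ B ⊆ X, B.Infinite →
      ∃ s ∈ closure (ι '' X), AccPt s (Filter.principal (ι '' B)) :=
  statement3_general src rng hsep hCLP ι hinj hhom hdense
end
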